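/- Let λ > 0, P = (a,b) ∈ Ω_λ, and r ≥ 1. A point X = (x₁,x₂) ∈ Ω_λ satisfies d_F(X,P) = (ln r)/λ if and only if (x₁ - ra)² + (x₂ - rb)² = ((r-1)/λ)²; i.e., the type 2 λ-Funk circle of center P lies on the Euclidean circle of center rP and radius (r-1)/λ. -/

import Mathlib

/-!
Off the diagonal, `dF λ X P = (1/λ) log ρ` with `ρ = (s - λ⟪X, P - X⟫) / (s - λ⟪P, P - X⟫)`,
whose denominator is positive because `P` lies in the disc. Clearing it, `ρ = r` reads
`(r - 1) s = λ ⟪r P - X, P - X⟫`; squaring, substituting `s²` and cancelling `‖P - X‖²` turns this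
into `λ² ‖X - r P‖² = (r - 1)²`. Conversely that equation forces `⟪r P - X, P - X⟫ > 0`, so
squaring loses nothing. On the diagonal both sides say `r = 1`.
-/

open RealInnerProductSpace Classical

noncomputable def pt (a b : ℝ) : EuclideanSpace ℝ (Fin 2) :=
  (WithLp.equiv 2 (Fin 2 → ℝ)).symm ![a, b]

/-- The λ-Funk metric. -/
noncomputable def Funk (lam : ℝ) (x y : EuclideanSpace ℝ (Fin 2)) : ℝ :=
  (Real.sqrt (lam ^ 2 * ⟪x, y⟫ ^ 2 + ‖y‖ ^ 2 * (1 - lam ^ 2 * ‖x‖ ^ 2)) + lam * ⟪x, y⟫) /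
    (1 - lam ^ 2 * ‖x‖ ^ 2)

/-- The λ-Funk distance. -/
noncomputable def dF (lam : ℝ) (P Q : EuclideanSpace ℝ (Fin 2)) : ℝ :=
  if P = Q then 0
  else (1 / lam) * Real.log
    ((Real.sqrt (lam ^ 2 * ⟪P, Q - P⟫ ^ 2 + (1 - lam ^ 2 * ‖P‖ ^ 2) * ‖Q - P‖ ^ 2)
        - lam * ⟪P, Q - P⟫) /
     (Real.sqrt (lam ^ 2 * ⟪P, Q - P⟫ ^ 2 + (1 - lam ^ 2 * ‖P‖ ^ 2) * ‖Q - P‖ ^ 2)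
        - lam * ⟪Q, Q - P⟫))

section Scalar

variable {lam u v w r : ℝ}

lemma sq_mul_sq_lt_one {t : ℝ} (hlam : 0 < lam) (ht₀ : 0 ≤ t) (ht : t < 1 / lam) :
    lam ^ 2 * t ^ 2 < 1 := by
  rw [← mul_pow]
  exact pow_lt_one₀ (by positivity) (by rwa [lt_div_iff₀ hlam, mul_comm] at ht) two_ne_zero

lemma mul_add_lt_sqrt (hq : lam ^ 2 * (w + 2 * u + v) < 1) (hv : 0 < v) :
    lam * (u + v) < √(lam ^ 2 * u ^ 2 + (1 - lam ^ 2 * w) * v) :=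
  Real.lt_sqrt_of_sq_lt (by nlinarith [mul_pos hv (sub_pos.2 hq)])

lemma div_sqrt_sub_eq_iff (hlam : 0 < lam) (hw : lam ^ 2 * w < 1)
    (hq : lam ^ 2 * (w + 2 * u + v) < 1) (hv : 0 < v) (hr : 1 ≤ r) :
    (√(lam ^ 2 * u ^ 2 + (1 - lam ^ 2 * w) * v) - lam * u) /
        (√(lam ^ 2 * u ^ 2 + (1 - lam ^ 2 * w) * v) - lam * (u + v)) = r ↔
      (r - 1) ^ 2 * w + 2 * r * (r - 1) * u + r ^ 2 * v = ((r - 1) / lam) ^ 2 := by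
  have hden := mul_add_lt_sqrt hq hv
  set s := √(lam ^ 2 * u ^ 2 + (1 - lam ^ 2 * w) * v)
  set t := (r - 1) * u + r * v
  have hs : s ^ 2 = lam ^ 2 * u ^ 2 + (1 - lam ^ 2 * w) * v :=
    Real.sq_sqrt (by nlinarith [mul_pos hv (sub_pos.2 hq)])
  have hsq : ((r - 1) * s) ^ 2 - (lam * t) ^ 2 =
      v * ((r - 1) ^ 2 - lam ^ 2 * ((r - 1) ^ 2 * w + 2 * r * (r - 1) * u + r ^ 2 * v)) := by
    rw [mul_pow, hs]; ring
  rw [div_eq_iff (sub_pos.2 hden).ne', div_pow, eq_div_iff (pow_pos hlam 2).ne']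
  constructor
  · intro h
    have hst : (r - 1) * s = lam * t := by linarith
    rw [hst, sub_self, zero_eq_mul] at hsq
    linarith [hsq.resolve_left hv.ne']
  · intro h
    -- the circle equation forces `λ t > 0`, which selects the root `(r - 1) s = λ t`
    have ht : 2 * r * lam * (lam * t) = (r - 1) ^ 2 * (1 - lam ^ 2 * w) + lam ^ 2 * r ^ 2 * v := by
      linear_combination h
    have ht_pos : 0 < lam * t := by
      refine pos_of_mul_pos_right (a := 2 * r * lam) ?_ (by positivity)
      rw [ht]
      have : 0 ≤ (r - 1) ^ 2 * (1 - lam ^ 2 * w) := mul_nonneg (sq_nonneg _) (by linarith)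
      positivity
    have hst : (r - 1) * s = lam * t := by
      rw [← sq_eq_sq₀ (mul_nonneg (by linarith) (Real.sqrt_nonneg _)) ht_pos.le, ← sub_eq_zero, hsq]
      linear_combination (-v) * h
    linarith

end Scalar

section InnerProductSpace

variable {E : Type*} [NormedAddCommGroup E] [InnerProductSpace ℝ E]

noncomputable def funkRatio (lam : ℝ) (x q : E) : ℝ :=
  (√(lam ^ 2 * ⟪x, q - x⟫ ^ 2 + (1 - lam ^ 2 * ‖x‖ ^ 2) * ‖q - x‖ ^ 2) - lam * ⟪x, q - x⟫) /
    (√(lam ^ 2 * ⟪x, q - x⟫ ^ 2 + (1 - lam ^ 2 * ‖x‖ ^ 2) * ‖q - x‖ ^ 2) - lam * ⟪q, q - x⟫)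

variable {lam r : ℝ} {x q : E}

lemma real_inner_sub_eq_add_norm_sq (x q : E) : ⟪q, q - x⟫ = ⟪x, q - x⟫ + ‖q - x‖ ^ 2 := by
  rw [← real_inner_self_eq_norm_sq, ← inner_add_left, add_sub_cancel]

lemma norm_sq_eq_add_inner_sub (x q : E) : ‖q‖ ^ 2 = ‖x‖ ^ 2 + 2 * ⟪x, q - x⟫ + ‖q - x‖ ^ 2 := by
  rw [← norm_add_sq_real, add_sub_cancel]

lemma norm_sub_smul_sq (x q : E) (r : ℝ) :
    ‖x - r • q‖ ^ 2 =
      (r - 1) ^ 2 * ‖x‖ ^ 2 + 2 * r * (r - 1) * ⟪x, q - x⟫ + r ^ 2 * ‖q - x‖ ^ 2 := by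
  rw [norm_sub_sq_real, norm_smul, mul_pow, Real.norm_eq_abs, sq_abs, inner_smul_right,
    norm_sq_eq_add_inner_sub x q, inner_sub_right, real_inner_self_eq_norm_sq]
  ring

lemma funkRatio_pos (hlam : 0 < lam) (hq : ‖q‖ < 1 / lam) (hxq : x ≠ q) :
    0 < funkRatio lam x q := by
  have hv : 0 < ‖q - x‖ ^ 2 := pow_pos (norm_pos_iff.2 (sub_ne_zero.2 hxq.symm)) 2
  have hq' := sq_mul_sq_lt_one hlam (norm_nonneg _) hq
  rw [norm_sq_eq_add_inner_sub x] at hq'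
  have hden := mul_add_lt_sqrt hq' hv
  rw [funkRatio, real_inner_sub_eq_add_norm_sq]
  exact div_pos (by nlinarith) (sub_pos.2 hden)

lemma funkRatio_eq_iff (hlam : 0 < lam) (hx : ‖x‖ < 1 / lam) (hq : ‖q‖ < 1 / lam) (hxq : x ≠ q)
    (hr : 1 ≤ r) : funkRatio lam x q = r ↔ ‖x - r • q‖ = (r - 1) / lam := by
  have hv : 0 < ‖q - x‖ ^ 2 := pow_pos (norm_pos_iff.2 (sub_ne_zero.2 hxq.symm)) 2
  have hq' := sq_mul_sq_lt_one hlam (norm_nonneg _) hq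
  rw [norm_sq_eq_add_inner_sub x] at hq'
  rw [funkRatio, real_inner_sub_eq_add_norm_sq,
    div_sqrt_sub_eq_iff hlam (sq_mul_sq_lt_one hlam (norm_nonneg _) hx) hq' hv hr,
    ← norm_sub_smul_sq, sq_eq_sq₀ (norm_nonneg _) (div_nonneg (sub_nonneg.2 hr) hlam.le)]

end InnerProductSpace

lemma dF_of_ne {lam : ℝ} {x q : EuclideanSpace ℝ (Fin 2)} (hxq : x ≠ q) :
    dF lam x q = 1 / lam * Real.log (funkRatio lam x q) := by
  rw [dF, if_neg hxq, funkRatio]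

lemma dF_eq_log_div_iff {lam r : ℝ} {x q : EuclideanSpace ℝ (Fin 2)} (hlam : 0 < lam)
    (hx : ‖x‖ < 1 / lam) (hq : ‖q‖ < 1 / lam) (hr : 1 ≤ r) :
    dF lam x q = Real.log r / lam ↔ ‖x - r • q‖ = (r - 1) / lam := by
  have hr₀ : 0 < r := by linarith
  by_cases hxq : x = q
  · subst hxq
    have hlog : Real.log r / lam = 0 ↔ r = 1 := by
      rw [div_eq_zero_iff, or_iff_left hlam.ne', ← Real.log_one,
        Real.log_injOn_pos.eq_iff hr₀ (Set.mem_Ioi.2 one_pos)]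
    have hsmul : x - r • x = (1 - r) • x := by rw [sub_smul, one_smul]
    rw [dF, if_pos rfl, eq_comm, hlog, hsmul, norm_smul, Real.norm_eq_abs, abs_sub_comm,
      abs_of_nonneg (sub_nonneg.2 hr), div_eq_mul_one_div, mul_eq_mul_left_iff, or_iff_right hx.ne,
      sub_eq_zero]
  · rw [dF_of_ne hxq, one_div_mul_eq_div, div_left_inj' hlam.ne',
      Real.log_injOn_pos.eq_iff (funkRatio_pos hlam hq hxq) hr₀, funkRatio_eq_iff hlam hx hq hxq hr]

lemma pt_sub_smul (x₁ x₂ a b r : ℝ) : pt x₁ x₂ - r • pt a b = pt (x₁ - r * a) (x₂ - r * b) := by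
  ext i; fin_cases i <;> simp [pt]

lemma norm_pt_sq (a b : ℝ) : ‖pt a b‖ ^ 2 = a ^ 2 + b ^ 2 := by
  simp [pt, EuclideanSpace.norm_sq_eq, Fin.sum_univ_two]

theorem funk_circle_type2 (lam a b x₁ x₂ r : ℝ) (hlam : 0 < lam)
    (hP : ‖pt a b‖ < 1 / lam) (hX : ‖pt x₁ x₂‖ < 1 / lam) (hr : 1 ≤ r) :
    dF lam (pt x₁ x₂) (pt a b) = Real.log r / lam ↔
      (x₁ - r * a) ^ 2 + (x₂ - r * b) ^ 2 = ((r - 1) / lam) ^ 2 := by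
  rw [dF_eq_log_div_iff hlam hX hP hr, pt_sub_smul, ← norm_pt_sq,
    sq_eq_sq₀ (norm_nonneg _) (div_nonneg (sub_nonneg.2 hr) hlam.le)]
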